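/- arXiv:1612.06483 — 7 statements merged into one kernel-verified Lean document; each statement's English description precedes it below -/
import Mathlib

section
/- Let z0 ≠ z1 be real numbers and w2, w3 real numbers, and let κ ∈ (0, 1/2]. Define z4 = (z0 + z1)/2, and set: for T_A the axis pair (first vertex z0, second vertex z4) with off-axis values w2^A = (1 − κ)z0 + κ·w2 and w3^A = (1 − κ)z0 + κ·w3; for T_B the axis pair (first vertex z4, second vertex z1) with off-axis values w2^B = (1 − κ)z1 + κ·w2 and w3^B = (1 − κ)z1 + κ·w3. Let c_T, c_A, c_B denote the absolute relative distances of the triples (z0, z1; w2, w3), (z0, z4; w2^A, w3^A), (z4, z1; w2^B, w3^B) respectively. Then max(c_A, c_B) ≤ max(c_T, 1). -/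
/-!
Both relative distances of an off-axis vertex are determined by the first one, `c`, through
`max |c| |1 - c|`. Seen from the first vertex, refinement scales `c` by `2κ ∈ [0, 1]`: then
`|2κ c| ≤ |c|`, and `1 - 2κ c` is a convex combination of `1` and `1 - c`. The child at the
second vertex is the same picture with the roles of the two axis vertices exchanged, which
replaces `c` by `1 - c` and leaves `max |c| |1 - c|` unchanged.
-/

noncomputable def firstRelDist (za zb w : ℝ) : ℝ := (w - za) / (zb - za)

noncomputable def absRelDist (za zb w w' : ℝ) : ℝ :=
  max (max |firstRelDist za zb w| |1 - firstRelDist za zb w|)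
      (max |firstRelDist za zb w'| |1 - firstRelDist za zb w'|)

lemma max_abs_one_sub_comm (c : ℝ) : max |1 - c| |1 - (1 - c)| = max |c| |1 - c| := by
  rw [sub_sub_cancel, max_comm]

lemma max_abs_mul_abs_one_sub_mul_le {t : ℝ} (c : ℝ) (ht0 : 0 ≤ t) (ht1 : t ≤ 1) :
    max |t * c| |1 - t * c| ≤ max (max |c| |1 - c|) 1 := by
  have hscaled : |t * c| ≤ |c| := by
    rw [abs_mul, abs_of_nonneg ht0]
    exact mul_le_of_le_one_left (abs_nonneg c) ht1
  have hconvex : |1 - t * c| ≤ max |1 - c| 1 := by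
    have hcomb : 1 - t * c = (1 - t) * 1 + t * (1 - c) := by ring
    calc |1 - t * c| ≤ (1 - t) * 1 + t * |1 - c| := by
          rw [hcomb]
          refine (abs_add_le _ _).trans ?_
          rw [abs_mul, abs_mul, abs_of_nonneg (sub_nonneg.2 ht1), abs_of_nonneg ht0, abs_one]
      _ ≤ (1 - t) * max |1 - c| 1 + t * max |1 - c| 1 :=
          add_le_add (mul_le_mul_of_nonneg_left (le_max_right _ _) (sub_nonneg.2 ht1))
            (mul_le_mul_of_nonneg_left (le_max_left _ _) ht0)
      _ = max |1 - c| 1 := by ring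
  refine max_le ?_ ?_
  · exact hscaled.trans ((le_max_left _ _).trans (le_max_left _ _))
  · exact hconvex.trans (max_le_max_right 1 (le_max_right _ _))

lemma firstRelDist_swap {za zb : ℝ} (h : za ≠ zb) (w : ℝ) :
    firstRelDist zb za w = 1 - firstRelDist za zb w := by
  have hd : zb - za ≠ 0 := sub_ne_zero.2 h.symm
  have hd' : za - zb ≠ 0 := sub_ne_zero.2 h
  unfold firstRelDist
  field_simp
  ring

lemma absRelDist_swap {za zb : ℝ} (h : za ≠ zb) (w w' : ℝ) :
    absRelDist zb za w w' = absRelDist za zb w w' := by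
  simp only [absRelDist, firstRelDist_swap h, max_abs_one_sub_comm]

lemma firstRelDist_midpoint_of_affine (za zb w κ : ℝ) :
    firstRelDist za ((za + zb) / 2) ((1 - κ) * za + κ * w) = 2 * κ * firstRelDist za zb w := by
  have hnum : (1 - κ) * za + κ * w - za = κ * (w - za) := by ring
  have hden : (za + zb) / 2 - za = (zb - za) / 2 := by ring
  rw [firstRelDist, firstRelDist, hnum, hden, div_div_eq_mul_div, mul_right_comm, mul_comm κ 2,
    mul_div_assoc]

lemma absRelDist_refine_le (za zb w w' : ℝ) {κ : ℝ} (hκ0 : 0 ≤ κ) (hκ1 : κ ≤ 1 / 2) :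
    absRelDist za ((za + zb) / 2) ((1 - κ) * za + κ * w) ((1 - κ) * za + κ * w') ≤
      max (absRelDist za zb w w') 1 := by
  have ht0 : 0 ≤ 2 * κ := by linarith
  have ht1 : 2 * κ ≤ 1 := by linarith
  rw [absRelDist, firstRelDist_midpoint_of_affine, firstRelDist_midpoint_of_affine]
  refine max_le ?_ ?_
  · exact (max_abs_mul_abs_one_sub_mul_le _ ht0 ht1).trans
      (max_le_max_right 1 (le_max_left _ _))
  · exact (max_abs_mul_abs_one_sub_mul_le _ ht0 ht1).trans
      (max_le_max_right 1 (le_max_right _ _))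

/-- Lemma 4.5: one anisotropic edge refinement with grading parameter
`κ ∈ (0, 1/2]` of an e-tetrahedron with axis z-coordinates `z0 ≠ z1` and
off-axis z-coordinates `w2, w3` produces two child e-tetrahedra `T_A`, `T_B`
whose absolute relative distances satisfy `max c_A c_B ≤ max c_T 1`. -/
theorem stmt_1 (z0 z1 w2 w3 κ : ℝ) (hz : z0 ≠ z1) (hκ0 : 0 < κ) (hκ1 : κ ≤ 1 / 2)
    (z4 w2A w3A w2B w3B cT cA cB : ℝ)
    (hz4 : z4 = (z0 + z1) / 2)
    (hw2A : w2A = (1 - κ) * z0 + κ * w2) (hw3A : w3A = (1 - κ) * z0 + κ * w3)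
    (hw2B : w2B = (1 - κ) * z1 + κ * w2) (hw3B : w3B = (1 - κ) * z1 + κ * w3)
    (hcT : cT = absRelDist z0 z1 w2 w3)
    (hcA : cA = absRelDist z0 z4 w2A w3A)
    (hcB : cB = absRelDist z4 z1 w2B w3B) :
    max cA cB ≤ max cT 1 := by
  subst hz4 hw2A hw3A hw2B hw3B hcT hcA hcB
  refine max_le (absRelDist_refine_le z0 z1 w2 w3 hκ0.le hκ1) ?_
  have hmid : (z0 + z1) / 2 ≠ z1 := fun h => hz (by linarith)
  rw [← absRelDist_swap hmid, ← absRelDist_swap hz, add_comm z0 z1]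
  exact absRelDist_refine_le z1 z0 w2 w3 hκ0.le hκ1
end

section
/- Let z0 ≠ z1 be real numbers and w2, w3 real numbers, and let κ_v, κ_ev be real numbers with 0 < κ_ev ≤ κ_v. Define z4 = (1 − κ_v)z0 + κ_v·z1, w2^R = (1 − κ_ev)z0 + κ_ev·w2 and w3^R = (1 − κ_ev)z0 + κ_ev·w3. Let c_T be the absolute relative distance of (z0, z1; w2, w3) and c_R the absolute relative distance of (z0, z4; w2^R, w3^R). Then c_R ≤ max(c_T, 1). -/
/-! Both axis and off-axis vertices of `T_R` arise from those of `T` by homotheties centred at `z0`,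
with ratios `κ_v` and `κ_ev`, so every first relative distance of `T_R` is `t = κ_ev / κ_v ∈ [0, 1]`
times the corresponding one of `T`. The function `c ↦ max |c| |1 - c|` is convex and equals `1`
at `c = 0`, hence its value at `t c = (1 - t) 0 + t c` is at most `max (max |c| |1 - c|) 1`. -/

theorem firstRelDist_homothety (za zb w a b : ℝ) :
    firstRelDist za ((1 - a) * za + a * zb) ((1 - b) * za + b * w)
      = b / a * firstRelDist za zb w := by
  have hzb : (1 - a) * za + a * zb - za = a * (zb - za) := by ring
  have hw : (1 - b) * za + b * w - za = b * (w - za) := by ring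
  rw [firstRelDist, firstRelDist, hzb, hw, div_mul_div_comm]

theorem max_abs_abs_one_sub_mul_le {t : ℝ} (ht0 : 0 ≤ t) (ht1 : t ≤ 1) (c : ℝ) :
    max |t * c| |1 - t * c| ≤ max (max |c| |1 - c|) 1 := by
  have hscale : |t * c| ≤ |c| := by
    rw [abs_mul, abs_of_nonneg ht0]
    exact mul_le_of_le_one_left (abs_nonneg c) ht1
  have hconvex : |1 - t * c| ≤ (1 - t) * 1 + t * |1 - c| := by
    calc |1 - t * c| = |(1 - t) * 1 + t * (1 - c)| := by ring_nf
      _ ≤ |(1 - t) * 1| + |t * (1 - c)| := abs_add_le _ _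
      _ = (1 - t) * 1 + t * |1 - c| := by
        rw [abs_mul, abs_mul, abs_one, abs_of_nonneg ht0, abs_of_nonneg (sub_nonneg.2 ht1)]
  set M := max (max |c| |1 - c|) 1
  have hM1 : 1 ≤ M := le_max_right _ _
  have hMc : |1 - c| ≤ M := le_max_of_le_left (le_max_right _ _)
  refine max_le (hscale.trans (le_max_of_le_left (le_max_left _ _))) ?_
  calc |1 - t * c| ≤ (1 - t) * 1 + t * |1 - c| := hconvex
    _ ≤ (1 - t) * M + t * M := by gcongr
    _ = M := by ring

theorem absRelDist_homothety_le {za zb w w' a b : ℝ} (hb : 0 ≤ b) (hba : b ≤ a) :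
    absRelDist za ((1 - a) * za + a * zb) ((1 - b) * za + b * w) ((1 - b) * za + b * w')
      ≤ max (absRelDist za zb w w') 1 := by
  have ht0 : 0 ≤ b / a := div_nonneg hb (hb.trans hba)
  have ht1 : b / a ≤ 1 := div_le_one_of_le₀ hba (hb.trans hba)
  rw [absRelDist, absRelDist, firstRelDist_homothety, firstRelDist_homothety]
  exact max_le
    ((max_abs_abs_one_sub_mul_le ht0 ht1 _).trans (max_le_max (le_max_left _ _) le_rfl))
    ((max_abs_abs_one_sub_mul_le ht0 ht1 _).trans (max_le_max (le_max_right _ _) le_rfl))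

theorem stmt_2_general (z0 z1 w2 w3 κv κev : ℝ)
    (hκev : 0 < κev) (hκvev : κev ≤ κv)
    (z4 w2R w3R cT cR : ℝ)
    (hz4 : z4 = (1 - κv) * z0 + κv * z1)
    (hw2R : w2R = (1 - κev) * z0 + κev * w2)
    (hw3R : w3R = (1 - κev) * z0 + κev * w3)
    (hcT : cT = absRelDist z0 z1 w2 w3)
    (hcR : cR = absRelDist z0 z4 w2R w3R) :
    cR ≤ max cT 1 := by
  subst hz4 hw2R hw3R hcT hcR
  exact absRelDist_homothety_le hκev.le hκvev

/-- Lemma 4.13: one anisotropic refinement of an ev-tetrahedron with vertex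
grading parameter `κ_v` and edge-cross-section parameter `κ_ev`, with
`0 < κ_ev ≤ κ_v`, produces a child ev-tetrahedron `T_R` whose absolute
relative distance satisfies `c_R ≤ max c_T 1`. -/
theorem stmt_2 (z0 z1 w2 w3 κv κev : ℝ) (hz : z0 ≠ z1)
    (hκev : 0 < κev) (hκvev : κev ≤ κv)
    (z4 w2R w3R cT cR : ℝ)
    (hz4 : z4 = (1 - κv) * z0 + κv * z1)
    (hw2R : w2R = (1 - κev) * z0 + κev * w2)
    (hw3R : w3R = (1 - κev) * z0 + κev * w3)
    (hcT : cT = absRelDist z0 z1 w2 w3)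
    (hcR : cR = absRelDist z0 z4 w2R w3R) :
    cR ≤ max cT 1 :=
  stmt_2_general z0 z1 w2 w3 κv κev hκev hκvev z4 w2R w3R cT cR hz4 hw2R hw3R hcT hcR
end

section
/- Let l > 0 and λ2, λ3, ξ3 ∈ ℝ with λ2 ≠ 0 and ξ3 ≠ 0, and define the reference vertices x̂0 = (0, 0, −l/2), x̂1 = (0, 0, l/2), x̂2 = (λ2, 0, −l/2), x̂3 = (λ3, ξ3, −l/2) in ℝ³. Let i ∈ ℕ, κ ∈ (0, 1/2], and ζ2, ζ3 ∈ ℝ, and define the points γ0 = (0, 0, −2^{−i}·l/2), γ1 = (0, 0, 2^{−i}·l/2), γ2 = (κ^i·λ2, 0, ζ2), γ3 = (κ^i·λ3, κ^i·ξ3, ζ3). Set b1 = −(2^i·ζ2 + l/2)/λ2 and b2 = (2^i·(ζ2·λ3 − λ2·ζ3) + (l/2)·(λ3 − λ2))/(λ2·ξ3), and let B be the linear map on ℝ³ with matrix rows (κ^{−i}, 0, 0), (0, κ^{−i}, 0), (b1·κ^{−i}, b2·κ^{−i}, 2^i). Then B·γ_k = x̂_k for k = 0, 1, 2, 3, B is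 invertible, and B maps the convex hull of {γ0, γ1, γ2, γ3} bijectively onto the convex hull of {x̂0, x̂1, x̂2, x̂3}. Moreover, if in addition |ζ2| ≤ M·2^{−i}·l and |ζ3| ≤ M·2^{−i}·l for some M ≥ 0, then |b1| ≤ (M + 1/2)·l/|λ2| and |b2| ≤ (M + 1/2)·l·(|λ2| + |λ3|)/(|λ2|·|ξ3|); in particular b1 and b2 are bounded independently of i. -/
open Matrix Set

theorem LinearMap.bijOn_convexHull_image {𝕜 E F : Type*} [Field 𝕜] [LinearOrder 𝕜]
    [IsStrictOrderedRing 𝕜] [AddCommGroup E] [Module 𝕜 E] [AddCommGroup F] [Module 𝕜 F]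
    {f : E →ₗ[𝕜] F} (hf : Function.Injective f) (s : Set E) :
    BijOn f (convexHull 𝕜 s) (convexHull 𝕜 (f '' s)) := by
  rw [← f.image_convexHull]
  exact hf.injOn.bijOn_image

section ScaleShear

variable {R : Type*} [CommRing R]

theorem mulVec_scaleShear (a c d e x y z : R) :
    !![a, 0, 0; 0, a, 0; c * a, d * a, e] *ᵥ ![x, y, z] =
      ![a * x, a * y, a * (c * x + d * y) + e * z] := by
  ext k
  fin_cases k <;> simp [mulVec, dotProduct, Fin.sum_univ_three]
  ring

theorem det_scaleShear (a c d e : R) :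
    !![a, 0, 0; 0, a, 0; c * a, d * a, e].det = a * a * e := by
  simp [det_fin_three]

end ScaleShear

theorem abs_mul_add_half_le {t ζ l M : ℝ} (ht : 0 < t) (hl : 0 ≤ l)
    (hζ : |ζ| ≤ M * t⁻¹ * l) : |t * ζ + l / 2| ≤ (M + 1 / 2) * l := by
  have htζ : t * |ζ| ≤ M * l := by
    calc t * |ζ| ≤ t * (M * t⁻¹ * l) := by gcongr
      _ = M * l := by field_simp
  calc |t * ζ + l / 2| ≤ |t * ζ| + |l / 2| := abs_add_le _ _
    _ = t * |ζ| + l / 2 := by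
      rw [abs_mul, abs_of_pos ht, abs_of_nonneg (by positivity : (0 : ℝ) ≤ l / 2)]
    _ ≤ (M + 1 / 2) * l := by linarith

theorem stmt_3_general (l lam2 lam3 xi3 : ℝ) (hl : 0 < l) (hlam2 : lam2 ≠ 0) (hxi3 : xi3 ≠ 0)
    (i : ℕ) (κ : ℝ) (hκ0 : 0 < κ) (ζ2 ζ3 : ℝ)
    (xr0 xr1 xr2 xr3 γ0 γ1 γ2 γ3 : Fin 3 → ℝ) (b1 b2 : ℝ) (B : Matrix (Fin 3) (Fin 3) ℝ)
    (hxr0 : xr0 = ![0, 0, -l / 2]) (hxr1 : xr1 = ![0, 0, l / 2])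
    (hxr2 : xr2 = ![lam2, 0, -l / 2]) (hxr3 : xr3 = ![lam3, xi3, -l / 2])
    (hγ0 : γ0 = ![0, 0, -((2 : ℝ) ^ (-(i : ℤ)) * l / 2)])
    (hγ1 : γ1 = ![0, 0, (2 : ℝ) ^ (-(i : ℤ)) * l / 2])
    (hγ2 : γ2 = ![κ ^ i * lam2, 0, ζ2])
    (hγ3 : γ3 = ![κ ^ i * lam3, κ ^ i * xi3, ζ3])
    (hb1 : b1 = -((2 : ℝ) ^ i * ζ2 + l / 2) / lam2)
    (hb2 : b2 = ((2 : ℝ) ^ i * (ζ2 * lam3 - lam2 * ζ3) + l / 2 * (lam3 - lam2)) /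
      (lam2 * xi3))
    (hB : B = !![κ ^ (-(i : ℤ)), 0, 0;
                 0, κ ^ (-(i : ℤ)), 0;
                 b1 * κ ^ (-(i : ℤ)), b2 * κ ^ (-(i : ℤ)), (2 : ℝ) ^ i]) :
    (B.mulVec γ0 = xr0 ∧ B.mulVec γ1 = xr1 ∧ B.mulVec γ2 = xr2 ∧ B.mulVec γ3 = xr3) ∧
    IsUnit B ∧
    Set.BijOn B.mulVec (convexHull ℝ {γ0, γ1, γ2, γ3}) (convexHull ℝ {xr0, xr1, xr2, xr3}) ∧
    (∀ M : ℝ, 0 ≤ M → |ζ2| ≤ M * (2 : ℝ) ^ (-(i : ℤ)) * l → |ζ3| ≤ M * (2 : ℝ) ^ (-(i : ℤ)) * l →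
      |b1| ≤ (M + 1 / 2) * l / |lam2| ∧
      |b2| ≤ (M + 1 / 2) * l * (|lam2| + |lam3|) / (|lam2| * |xi3|)) := by
  have hs : κ ^ i ≠ 0 := pow_ne_zero i hκ0.ne'
  have ht : (0 : ℝ) < 2 ^ i := by positivity
  simp only [_root_.zpow_neg, zpow_natCast] at hγ0 hγ1 hB ⊢
  have hvertices :
      B *ᵥ γ0 = xr0 ∧ B *ᵥ γ1 = xr1 ∧ B *ᵥ γ2 = xr2 ∧ B *ᵥ γ3 = xr3 := by
    subst hB hγ0 hγ1 hγ2 hγ3 hxr0 hxr1 hxr2 hxr3 hb1 hb2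
    refine ⟨?_, ?_, ?_, ?_⟩ <;> rw [mulVec_scaleShear] <;> refine vec3_eq ?_ ?_ ?_ <;>
      field_simp <;> ring
  have hunit : IsUnit B := by
    rw [isUnit_iff_isUnit_det, hB, det_scaleShear]
    exact isUnit_iff_ne_zero.2 (by positivity)
  obtain ⟨h0, h1, h2, h3⟩ := hvertices
  refine ⟨⟨h0, h1, h2, h3⟩, hunit, ?_, fun M _ hζ2 hζ3 => ⟨?_, ?_⟩⟩
  · simpa only [image_insert_eq, image_singleton, coe_mulVecLin, h0, h1, h2, h3] using
      (mulVecLin B).bijOn_convexHull_image (mulVec_injective_iff_isUnit.2 hunit)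
        {γ0, γ1, γ2, γ3}
  · rw [hb1, abs_div, abs_neg]
    gcongr
    exact abs_mul_add_half_le ht hl.le hζ2
  · -- The numerator of `b2` recombines the two numerators controlled as for `b1`.
    have hnum : (2 : ℝ) ^ i * (ζ2 * lam3 - lam2 * ζ3) + l / 2 * (lam3 - lam2) =
        lam3 * (2 ^ i * ζ2 + l / 2) - lam2 * (2 ^ i * ζ3 + l / 2) := by ring
    rw [hb2, hnum, abs_div, abs_mul]
    gcongr
    calc _ ≤ |lam3 * (2 ^ i * ζ2 + l / 2)| + |lam2 * (2 ^ i * ζ3 + l / 2)| := abs_sub _ _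
      _ ≤ |lam3| * ((M + 1 / 2) * l) + |lam2| * ((M + 1 / 2) * l) := by
        rw [abs_mul, abs_mul]
        gcongr
        · exact abs_mul_add_half_le ht hl.le hζ2
        · exact abs_mul_add_half_le ht hl.le hζ3
      _ = (M + 1 / 2) * l * (|lam2| + |lam3|) := by ring

/-- Lemma 4.6: the explicit linear transformation `B_{e,i}` maps the level-`i`
e-tetrahedron `conv{γ0, γ1, γ2, γ3}` bijectively onto the reference
e-tetrahedron `conv{xr0, xr1, xr2, xr3}`, sending vertex to vertex, and its
off-diagonal entries `b1, b2` are bounded independently of `i` whenever the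
relative z-distances of the tetrahedron are bounded. -/
theorem stmt_3 (l lam2 lam3 xi3 : ℝ) (hl : 0 < l) (hlam2 : lam2 ≠ 0) (hxi3 : xi3 ≠ 0)
    (i : ℕ) (κ : ℝ) (hκ0 : 0 < κ) (hκ1 : κ ≤ 1 / 2) (ζ2 ζ3 : ℝ)
    (xr0 xr1 xr2 xr3 γ0 γ1 γ2 γ3 : Fin 3 → ℝ) (b1 b2 : ℝ) (B : Matrix (Fin 3) (Fin 3) ℝ)
    (hxr0 : xr0 = ![0, 0, -l / 2]) (hxr1 : xr1 = ![0, 0, l / 2])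
    (hxr2 : xr2 = ![lam2, 0, -l / 2]) (hxr3 : xr3 = ![lam3, xi3, -l / 2])
    (hγ0 : γ0 = ![0, 0, -((2 : ℝ) ^ (-(i : ℤ)) * l / 2)])
    (hγ1 : γ1 = ![0, 0, (2 : ℝ) ^ (-(i : ℤ)) * l / 2])
    (hγ2 : γ2 = ![κ ^ i * lam2, 0, ζ2])
    (hγ3 : γ3 = ![κ ^ i * lam3, κ ^ i * xi3, ζ3])
    (hb1 : b1 = -((2 : ℝ) ^ i * ζ2 + l / 2) / lam2)
    (hb2 : b2 = ((2 : ℝ) ^ i * (ζ2 * lam3 - lam2 * ζ3) + l / 2 * (lam3 - lam2)) /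
      (lam2 * xi3))
    (hB : B = !![κ ^ (-(i : ℤ)), 0, 0;
                 0, κ ^ (-(i : ℤ)), 0;
                 b1 * κ ^ (-(i : ℤ)), b2 * κ ^ (-(i : ℤ)), (2 : ℝ) ^ i]) :
    (B.mulVec γ0 = xr0 ∧ B.mulVec γ1 = xr1 ∧ B.mulVec γ2 = xr2 ∧ B.mulVec γ3 = xr3) ∧
    IsUnit B ∧
    Set.BijOn B.mulVec (convexHull ℝ {γ0, γ1, γ2, γ3}) (convexHull ℝ {xr0, xr1, xr2, xr3}) ∧
    (∀ M : ℝ, 0 ≤ M → |ζ2| ≤ M * (2 : ℝ) ^ (-(i : ℤ)) * l → |ζ3| ≤ M * (2 : ℝ) ^ (-(i : ℤ)) * l →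
      |b1| ≤ (M + 1 / 2) * l / |lam2| ∧
      |b2| ≤ (M + 1 / 2) * l * (|lam2| + |lam3|) / (|lam2| * |xi3|)) :=
  stmt_3_general l lam2 lam3 xi3 hl hlam2 hxi3 i κ hκ0 ζ2 ζ3 xr0 xr1 xr2 xr3 γ0 γ1 γ2 γ3 b1 b2 B
    hxr0 hxr1 hxr2 hxr3 hγ0 hγ1 hγ2 hγ3 hb1 hb2 hB
end

section
/- Let l > 0 and λ2, λ3, ξ3 ∈ ℝ with λ2 ≠ 0 and ξ3 ≠ 0, and define the reference vertices x̂0 = (0, 0, −l/2), x̂1 = (0, 0, l/2), x̂2 = (λ2, 0, −l/2), x̂3 = (λ3, ξ3, −l/2) in ℝ³. Let i ∈ ℕ, let κ_v, κ_ev be reals with 0 < κ_ev ≤ κ_v ≤ 1/2, and let ζ2, ζ3 ∈ ℝ. Define γ0 = (0, 0, −κ_v^i·l/2), γ1 = (0, 0, κ_v^i·l/2), γ2 = (κ_ev^i·λ2, 0, ζ2), γ3 = (κ_ev^i·λ3, κ_ev^i·ξ3, ζ3). Set b1 = −(κ_v^{−i}·ζ2 + l/2)/λ2 and b2 = (κ_v^{−i}·(ζ2·λ3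 − λ2·ζ3) + (l/2)·(λ3 − λ2))/(λ2·ξ3), and let B be the linear map on ℝ³ with matrix rows (κ_ev^{−i}, 0, 0), (0, κ_ev^{−i}, 0), (b1·κ_ev^{−i}, b2·κ_ev^{−i}, κ_v^{−i}). Then B·γ_k = x̂_k for k = 0, 1, 2, 3, B is invertible, and B maps the convex hull of {γ0, γ1, γ2, γ3} bijectively onto the convex hull of {x̂0, x̂1, x̂2, x̂3}. Moreover, if |ζ2| ≤ M·κ_v^i·l and |ζ3| ≤ M·κ_v^i·l for some M ≥ 0, then |b1| ≤ (M + 1/2)·l/|λ2| and |b2| ≤ (M + 1/2)·l·(|λ2| + |λ3|)/(|λ2|·|ξ3|); in particular b1 and b2 are bounded independently of i. -/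
/-!
`B` is lower triangular with diagonal `(κev⁻ⁱ, κev⁻ⁱ, κv⁻ⁱ)`, hence invertible, and an injective
linear map carries the convex hull of the vertices bijectively onto the convex hull of their
images. Writing `t = κv⁻ⁱ`, the numerator of `b2` equals `(t ζ2 + l/2) λ3 - (t ζ3 + l/2) λ2`, and
the bounded relative z-distances give `|t ζk| ≤ M l`; this bounds `b1` and `b2` uniformly in `i`.
-/

open Matrix

theorem Set.bijOn_convexHull_of_injective {E F : Type*} [AddCommGroup E] [Module ℝ E]
    [AddCommGroup F] [Module ℝ F] (f : E →ₗ[ℝ] F) (hf : Function.Injective f) (s : Set E) :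
    Set.BijOn f (convexHull ℝ s) (convexHull ℝ (f '' s)) :=
  f.image_convexHull s ▸ hf.injOn.bijOn_image

theorem zpow_neg_natCast_mul_pow {G₀ : Type*} [GroupWithZero G₀] {κ : G₀} (hκ : κ ≠ 0) (i : ℕ) :
    κ ^ (-(i : ℤ)) * κ ^ i = 1 := by
  rw [_root_.zpow_neg, zpow_natCast, inv_mul_cancel₀ (pow_ne_zero i hκ)]

/-- The matrix `B_{ev,i}` of the paper, with `a = κev⁻ⁱ` and `e = κv⁻ⁱ`. -/
def evMap (a e b1 b2 : ℝ) : Matrix (Fin 3) (Fin 3) ℝ :=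
  !![a, 0, 0; 0, a, 0; b1 * a, b2 * a, e]

section evMap

variable {a e b1 b2 : ℝ}

theorem evMap_mulVec (x y z : ℝ) :
    evMap a e b1 b2 *ᵥ ![x, y, z] = ![a * x, a * y, b1 * (a * x) + b2 * (a * y) + e * z] := by
  ext k
  fin_cases k <;> simp [evMap, Matrix.mulVec, dotProduct, Fin.sum_univ_three]
  ring

theorem det_evMap : (evMap a e b1 b2).det = a ^ 2 * e := by
  simp [evMap, det_fin_three, sq]

theorem isUnit_evMap (ha : a ≠ 0) (he : e ≠ 0) : IsUnit (evMap a e b1 b2) := by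
  rw [Matrix.isUnit_iff_isUnit_det, det_evMap]
  exact (mul_ne_zero (pow_ne_zero 2 ha) he).isUnit

end evMap

theorem evMap_mulVec_vertices {a p e q l lam2 lam3 xi3 ζ2 ζ3 b1 b2 : ℝ}
    (ha : a * p = 1) (he : e * q = 1) (hlam2 : lam2 ≠ 0) (hxi3 : xi3 ≠ 0)
    (hb1 : b1 = -(e * ζ2 + l / 2) / lam2)
    (hb2 : b2 = (e * (ζ2 * lam3 - lam2 * ζ3) + l / 2 * (lam3 - lam2)) / (lam2 * xi3)) :
    evMap a e b1 b2 *ᵥ ![0, 0, -(q * l / 2)] = ![0, 0, -l / 2] ∧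
    evMap a e b1 b2 *ᵥ ![0, 0, q * l / 2] = ![0, 0, l / 2] ∧
    evMap a e b1 b2 *ᵥ ![p * lam2, 0, ζ2] = ![lam2, 0, -l / 2] ∧
    evMap a e b1 b2 *ᵥ ![p * lam3, p * xi3, ζ3] = ![lam3, xi3, -l / 2] := by
  have hb1' : b1 * lam2 = -(e * ζ2 + l / 2) := by rw [hb1]; field_simp
  have hb12 : b1 * lam3 + b2 * xi3 = -(e * ζ3 + l / 2) := by rw [hb1, hb2]; field_simp; ring
  simp only [evMap_mulVec, mul_zero, add_zero, zero_add, vecCons_inj, and_true, true_and]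
  refine ⟨?_, ?_, ⟨?_, ?_⟩, ⟨?_, ?_, ?_⟩⟩
  · linear_combination (-l / 2) * he
  · linear_combination (l / 2) * he
  · linear_combination lam2 * ha
  · linear_combination (b1 * lam2) * ha + hb1'
  · linear_combination lam3 * ha
  · linear_combination xi3 * ha
  · linear_combination (b1 * lam3 + b2 * xi3) * ha + hb12

section ShearBounds

variable {t l M ζ2 ζ3 lam2 lam3 xi3 : ℝ}

theorem abs_mul_zpow_neg_le {κ ζ : ℝ} (hκ : 0 < κ) (i : ℕ) (hζ : |ζ| ≤ M * κ ^ i * l) :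
    |κ ^ (-(i : ℤ)) * ζ| ≤ M * l := by
  rw [_root_.zpow_neg, zpow_natCast, abs_mul, abs_inv, abs_of_pos (pow_pos hκ i),
    inv_mul_le_iff₀ (pow_pos hκ i)]
  linarith

theorem abs_add_half_le {ζ : ℝ} (hl : 0 ≤ l) (hζ : |t * ζ| ≤ M * l) :
    |t * ζ + l / 2| ≤ (M + 1 / 2) * l := by
  calc |t * ζ + l / 2| ≤ |t * ζ| + |l / 2| := abs_add_le _ _
    _ ≤ M * l + l / 2 := by rw [abs_of_nonneg (div_nonneg hl zero_le_two)]; linarith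
    _ = (M + 1 / 2) * l := by ring

theorem abs_shear_fst_le (hl : 0 ≤ l) (hζ2 : |t * ζ2| ≤ M * l) :
    |-(t * ζ2 + l / 2) / lam2| ≤ (M + 1 / 2) * l / |lam2| := by
  rw [abs_div, abs_neg]
  gcongr
  exact abs_add_half_le hl hζ2

theorem abs_shear_snd_le (hl : 0 ≤ l) (hζ2 : |t * ζ2| ≤ M * l) (hζ3 : |t * ζ3| ≤ M * l) :
    |(t * (ζ2 * lam3 - lam2 * ζ3) + l / 2 * (lam3 - lam2)) / (lam2 * xi3)| ≤
      (M + 1 / 2) * l * (|lam2| + |lam3|) / (|lam2| * |xi3|) := by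
  rw [abs_div, abs_mul]
  gcongr
  calc |t * (ζ2 * lam3 - lam2 * ζ3) + l / 2 * (lam3 - lam2)|
      = |(t * ζ2 + l / 2) * lam3 - (t * ζ3 + l / 2) * lam2| := by ring_nf
    _ ≤ |t * ζ2 + l / 2| * |lam3| + |t * ζ3 + l / 2| * |lam2| := by
      simpa only [abs_mul] using abs_sub ((t * ζ2 + l / 2) * lam3) ((t * ζ3 + l / 2) * lam2)
    _ ≤ (M + 1 / 2) * l * |lam3| + (M + 1 / 2) * l * |lam2| := by
      gcongr
      exacts [abs_add_half_le hl hζ2, abs_add_half_le hl hζ3]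
    _ = (M + 1 / 2) * l * (|lam2| + |lam3|) := by ring

end ShearBounds

theorem stmt_4_general (l lam2 lam3 xi3 : ℝ) (hl : 0 < l) (hlam2 : lam2 ≠ 0) (hxi3 : xi3 ≠ 0)
    (i : ℕ) (κv κev : ℝ) (hκev : 0 < κev) (hκvev : κev ≤ κv)
    (ζ2 ζ3 : ℝ)
    (xr0 xr1 xr2 xr3 γ0 γ1 γ2 γ3 : Fin 3 → ℝ) (b1 b2 : ℝ) (B : Matrix (Fin 3) (Fin 3) ℝ)
    (hxr0 : xr0 = ![0, 0, -l / 2]) (hxr1 : xr1 = ![0, 0, l / 2])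
    (hxr2 : xr2 = ![lam2, 0, -l / 2]) (hxr3 : xr3 = ![lam3, xi3, -l / 2])
    (hγ0 : γ0 = ![0, 0, -(κv ^ i * l / 2)])
    (hγ1 : γ1 = ![0, 0, κv ^ i * l / 2])
    (hγ2 : γ2 = ![κev ^ i * lam2, 0, ζ2])
    (hγ3 : γ3 = ![κev ^ i * lam3, κev ^ i * xi3, ζ3])
    (hb1 : b1 = -(κv ^ (-(i : ℤ)) * ζ2 + l / 2) / lam2)
    (hb2 : b2 = (κv ^ (-(i : ℤ)) * (ζ2 * lam3 - lam2 * ζ3) + l / 2 * (lam3 - lam2)) /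
      (lam2 * xi3))
    (hB : B = !![κev ^ (-(i : ℤ)), 0, 0;
                 0, κev ^ (-(i : ℤ)), 0;
                 b1 * κev ^ (-(i : ℤ)), b2 * κev ^ (-(i : ℤ)), κv ^ (-(i : ℤ))]) :
    (B.mulVec γ0 = xr0 ∧ B.mulVec γ1 = xr1 ∧ B.mulVec γ2 = xr2 ∧ B.mulVec γ3 = xr3) ∧
    IsUnit B ∧
    Set.BijOn B.mulVec (convexHull ℝ {γ0, γ1, γ2, γ3}) (convexHull ℝ {xr0, xr1, xr2, xr3}) ∧
    (∀ M : ℝ, 0 ≤ M → |ζ2| ≤ M * κv ^ i * l → |ζ3| ≤ M * κv ^ i * l →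
      |b1| ≤ (M + 1 / 2) * l / |lam2| ∧
      |b2| ≤ (M + 1 / 2) * l * (|lam2| + |lam3|) / (|lam2| * |xi3|)) := by
  have hκv : 0 < κv := hκev.trans_le hκvev
  have hev := zpow_neg_natCast_mul_pow hκev.ne' i
  have hv := zpow_neg_natCast_mul_pow hκv.ne' i
  obtain rfl : B = evMap (κev ^ (-(i : ℤ))) (κv ^ (-(i : ℤ))) b1 b2 := hB
  have hunit := isUnit_evMap (b1 := b1) (b2 := b2) (left_ne_zero_of_mul_eq_one hev)
    (left_ne_zero_of_mul_eq_one hv)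
  have hbij := Set.bijOn_convexHull_of_injective (mulVecLin _)
    (mulVec_injective_iff_isUnit.2 hunit) {γ0, γ1, γ2, γ3}
  obtain ⟨h0, h1, h2, h3⟩ := evMap_mulVec_vertices hev hv hlam2 hxi3 hb1 hb2
  subst hxr0 hxr1 hxr2 hxr3 hγ0 hγ1 hγ2 hγ3
  refine ⟨⟨h0, h1, h2, h3⟩, hunit, ?_, fun M _ hζ2 hζ3 => ⟨?_, ?_⟩⟩
  · simpa only [coe_mulVecLin, Set.image_insert_eq, Set.image_singleton, h0, h1, h2, h3] using
      hbij
  · rw [hb1]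
    exact abs_shear_fst_le hl.le (abs_mul_zpow_neg_le hκv i hζ2)
  · rw [hb2]
    exact abs_shear_snd_le hl.le (abs_mul_zpow_neg_le hκv i hζ2) (abs_mul_zpow_neg_le hκv i hζ3)

/-- Lemma 4.15: the explicit linear transformation `B_{ev,i}` maps the level-`i`
ev-tetrahedron `conv{γ0, γ1, γ2, γ3}` bijectively onto the reference
tetrahedron `conv{xr0, xr1, xr2, xr3}`, sending vertex to vertex, and its
off-diagonal entries `b1, b2` are bounded independently of `i` whenever the
relative z-distances of the tetrahedron are bounded. -/
theorem stmt_4 (l lam2 lam3 xi3 : ℝ) (hl : 0 < l) (hlam2 : lam2 ≠ 0) (hxi3 : xi3 ≠ 0)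
    (i : ℕ) (κv κev : ℝ) (hκev : 0 < κev) (hκvev : κev ≤ κv) (hκv : κv ≤ 1 / 2)
    (ζ2 ζ3 : ℝ)
    (xr0 xr1 xr2 xr3 γ0 γ1 γ2 γ3 : Fin 3 → ℝ) (b1 b2 : ℝ) (B : Matrix (Fin 3) (Fin 3) ℝ)
    (hxr0 : xr0 = ![0, 0, -l / 2]) (hxr1 : xr1 = ![0, 0, l / 2])
    (hxr2 : xr2 = ![lam2, 0, -l / 2]) (hxr3 : xr3 = ![lam3, xi3, -l / 2])
    (hγ0 : γ0 = ![0, 0, -(κv ^ i * l / 2)])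
    (hγ1 : γ1 = ![0, 0, κv ^ i * l / 2])
    (hγ2 : γ2 = ![κev ^ i * lam2, 0, ζ2])
    (hγ3 : γ3 = ![κev ^ i * lam3, κev ^ i * xi3, ζ3])
    (hb1 : b1 = -(κv ^ (-(i : ℤ)) * ζ2 + l / 2) / lam2)
    (hb2 : b2 = (κv ^ (-(i : ℤ)) * (ζ2 * lam3 - lam2 * ζ3) + l / 2 * (lam3 - lam2)) /
      (lam2 * xi3))
    (hB : B = !![κev ^ (-(i : ℤ)), 0, 0;
                 0, κev ^ (-(i : ℤ)), 0;
                 b1 * κev ^ (-(i : ℤ)), b2 * κev ^ (-(i : ℤ)), κv ^ (-(i : ℤ))]) :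
    (B.mulVec γ0 = xr0 ∧ B.mulVec γ1 = xr1 ∧ B.mulVec γ2 = xr2 ∧ B.mulVec γ3 = xr3) ∧
    IsUnit B ∧
    Set.BijOn B.mulVec (convexHull ℝ {γ0, γ1, γ2, γ3}) (convexHull ℝ {xr0, xr1, xr2, xr3}) ∧
    (∀ M : ℝ, 0 ≤ M → |ζ2| ≤ M * κv ^ i * l → |ζ3| ≤ M * κv ^ i * l →
      |b1| ≤ (M + 1 / 2) * l / |lam2| ∧
      |b2| ≤ (M + 1 / 2) * l * (|lam2| + |lam3|) / (|lam2| * |xi3|)) :=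
  stmt_4_general l lam2 lam3 xi3 hl hlam2 hxi3 i κv κev hκev hκvev ζ2 ζ3 xr0 xr1 xr2 xr3 γ0 γ1 γ2 γ3
    b1 b2 B hxr0 hxr1 hxr2 hxr3 hγ0 hγ1 hγ2 hγ3 hb1 hb2 hB
end

section
/- Let m ≥ 1 be a real number and let a_v, a_e, a_ev be real numbers with 0 < a_ev ≤ a_v ≤ m and a_ev ≤ a_e. Define κ_v = 2^{−m/a_v}, κ_ev = 2^{−m/a_ev}, and a_V = (m + 1)·(1 − a_ev/a_v) + a_ev. Then for every natural number i, every real t with 0 ≤ t ≤ m + 1, and every real ρ with κ_ev^i ≤ ρ ≤ κ_v^i, one has 2^{i·m} · κ_v^{i·t} · κ_ev^{i·a_e} ≤ ρ^{t − a_V + a_e}. -/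
open Real

/-!
All three sides of the inequality are powers of `2` except `ρ ^ s`, where `s = t - a_V + a_e`.
Since `ρ` lies between `κ_ev ^ i` and `κ_v ^ i`, the power `ρ ^ s` is at least the smaller of
`(κ_ev ^ i) ^ s` and `(κ_v ^ i) ^ s`, whatever the sign of `s`. Both of these dominate the
left-hand side: comparing exponents of `2`, the differences are
`i m (m + 1 - t)(a_v - a_ev) / (a_v a_ev)` and
`i m (a_v - a_ev)(a_ev (m + 1 - a_v) + a_e a_v) / (a_v² a_ev)`, both nonnegative.
-/

lemma min_rpow_le_rpow_of_mem_Icc {a b x : ℝ} (ha : 0 < a) (hax : a ≤ x) (hxb : x ≤ b) (s : ℝ) :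
    min (a ^ s) (b ^ s) ≤ x ^ s := by
  rcases le_total 0 s with hs | hs
  · exact min_le_left _ _ |>.trans (rpow_le_rpow ha.le hax hs)
  · exact min_le_right _ _ |>.trans (rpow_le_rpow_of_nonpos (ha.trans_le hax) hxb hs)

section Exponents

variable {m av ae aev n t : ℝ}

lemma grading_exponent_le_ev (hm : 0 ≤ m) (haev : 0 < aev) (haevv : aev ≤ av) (hn : 0 ≤ n)
    (ht : t ≤ m + 1) :
    n * m + -(m / av) * (n * t) + -(m / aev) * (n * ae) ≤
      -(m / aev) * n * (t - ((m + 1) * (1 - aev / av) + aev) + ae) := by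
  have hav : 0 < av := haev.trans_le haevv
  rw [← sub_nonneg]
  have key : -(m / aev) * n * (t - ((m + 1) * (1 - aev / av) + aev) + ae) -
      (n * m + -(m / av) * (n * t) + -(m / aev) * (n * ae)) =
        n * m * (m + 1 - t) * (av - aev) / (av * aev) := by
    field_simp
    ring
  rw [key]
  have : 0 ≤ m + 1 - t := by linarith
  have : 0 ≤ av - aev := by linarith
  positivity

lemma grading_exponent_le_v (hm : 0 ≤ m) (haev : 0 < aev) (haevv : aev ≤ av) (havm : av ≤ m)
    (haeve : aev ≤ ae) (hn : 0 ≤ n) :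
    n * m + -(m / av) * (n * t) + -(m / aev) * (n * ae) ≤
      -(m / av) * n * (t - ((m + 1) * (1 - aev / av) + aev) + ae) := by
  have hav : 0 < av := haev.trans_le haevv
  rw [← sub_nonneg]
  have key : -(m / av) * n * (t - ((m + 1) * (1 - aev / av) + aev) + ae) -
      (n * m + -(m / av) * (n * t) + -(m / aev) * (n * ae)) =
        n * m * (av - aev) * (aev * (m + 1 - av) + ae * av) / (av ^ 2 * aev) := by
    field_simp
    ring
  rw [key]
  have : 0 ≤ av - aev := by linarith
  have : 0 ≤ aev * (m + 1 - av) + ae * av := by nlinarith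
  positivity

end Exponents

/-- The combined case analysis inside Theorem 4.14: with
`κ_v = 2^{−m/a_v}`, `κ_ev = 2^{−m/a_ev}`, and
`a_V = (m+1)(1 − a_ev/a_v) + a_ev`, for every refinement level `i`, every
`t ∈ [0, m+1]` and every `ρ` with `κ_ev^i ≤ ρ ≤ κ_v^i`, one has
`2^{im} κ_v^{it} κ_ev^{i a_e} ≤ ρ^{t − a_V + a_e}` (real powers). -/
theorem stmt_5 (m av ae aev : ℝ) (hm : 1 ≤ m)
    (haev : 0 < aev) (haevv : aev ≤ av) (havm : av ≤ m) (haeve : aev ≤ ae)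
    (κv κev aV : ℝ)
    (hκv : κv = (2 : ℝ) ^ (-(m / av)))
    (hκev : κev = (2 : ℝ) ^ (-(m / aev)))
    (haV : aV = (m + 1) * (1 - aev / av) + aev) :
    ∀ (i : ℕ) (t : ℝ), 0 ≤ t → t ≤ m + 1 →
      ∀ ρ : ℝ, κev ^ (i : ℝ) ≤ ρ → ρ ≤ κv ^ (i : ℝ) →
        (2 : ℝ) ^ ((i : ℝ) * m) * κv ^ ((i : ℝ) * t) * κev ^ ((i : ℝ) * ae) ≤
          ρ ^ (t - aV + ae) := by
  intro i t _ ht ρ hρev hρv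
  subst hκv hκev haV
  have hm0 : 0 ≤ m := zero_le_one.trans hm
  have hn : (0 : ℝ) ≤ i := i.cast_nonneg
  refine le_trans ?_ (min_rpow_le_rpow_of_mem_Icc (by positivity) hρev hρv _)
  simp only [← rpow_mul zero_le_two, ← rpow_add zero_lt_two, le_min_iff,
    rpow_le_rpow_left_iff one_lt_two]
  exact ⟨grading_exponent_le_ev hm0 haev haevv hn ht,
    grading_exponent_le_v hm0 haev haevv havm haeve hn⟩
end

section
/- Let m ≥ 1 be a real number and let a_v, a_e, a_ev be real numbers with 0 < a_ev ≤ a_v ≤ m and a_ev ≤ a_e. Define κ_v = 2^{−m/a_v}, κ_ev = 2^{−m/a_ev}, and a_V = (m + 1)·(1 − a_ev/a_v) + a_ev. Then for every natural number n, every real t with 0 ≤ t ≤ m + 1, and all positive reals ρ and ρ̂ with κ_ev^n · ρ̂ ≤ ρ ≤ κ_v^n · ρ̂, one has 2^{n·m} · κ_v^{n·t} · κ_ev^{n·a_e} · ρ̂^{t − a_V + a_e} ≤ ρ^{t − a_V + a_e}. -/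
open Real

/-!
Both sides are powers of `2` times powers of `ρh` and `ρ`, so everything reduces to comparing
exponents of `2`. Writing `s = t - aV + ae`, the hypothesis `κev^n ρh ≤ ρ ≤ κv^n ρh` gives
`ρ^s ≥ κev^{ns} ρh^s` when `s ≥ 0` and `ρ^s ≥ κv^{ns} ρh^s` when `s ≤ 0`. The
coefficient `2^{nm} κv^{nt} κev^{n ae}` is bounded by both `κev^{ns}` and `κv^{ns}`, whatever
the sign of `s`: the two exponent gaps are `(m/aev - m/av)(t - m - 1)` and
`(m/aev - m/av)(aev - ae - (m+1) aev/av)`, both nonpositive.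
-/

lemma le_rpow_of_mul_le_of_le_mul {a b c ρ ρh s : ℝ} (ha : 0 < a) (hb : 0 < b)
    (hρh : 0 < ρh) (hlo : a * ρh ≤ ρ) (hhi : ρ ≤ b * ρh) (hca : c ≤ a ^ s)
    (hcb : c ≤ b ^ s) :
    c * ρh ^ s ≤ ρ ^ s := by
  have hρ : 0 < ρ := (mul_pos ha hρh).trans_le hlo
  rcases le_total 0 s with hs | hs
  · calc c * ρh ^ s ≤ a ^ s * ρh ^ s := mul_le_mul_of_nonneg_right hca (rpow_nonneg hρh.le s)
      _ = (a * ρh) ^ s := (mul_rpow ha.le hρh.le).symm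
      _ ≤ ρ ^ s := rpow_le_rpow (mul_pos ha hρh).le hlo hs
  · calc c * ρh ^ s ≤ b ^ s * ρh ^ s := mul_le_mul_of_nonneg_right hcb (rpow_nonneg hρh.le s)
      _ = (b * ρh) ^ s := (mul_rpow hb.le hρh.le).symm
      _ ≤ ρ ^ s := rpow_le_rpow_of_nonpos hρ hhi hs

lemma two_rpow_mul_mul_two_rpow_neg_mul_two_rpow_neg (n m p q t e : ℝ) :
    (2 : ℝ) ^ (n * m) * (2 ^ (-p)) ^ (n * t) * (2 ^ (-q)) ^ (n * e) =
      2 ^ (n * (m - p * t - q * e)) := by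
  rw [← rpow_mul zero_le_two, ← rpow_mul zero_le_two, ← rpow_add two_pos,
    ← rpow_add two_pos]
  ring_nf

lemma two_rpow_mul_le_rpow_of_le {n : ℕ} {e c s : ℝ} (h : e ≤ -c * s) :
    (2 : ℝ) ^ ((n : ℝ) * e) ≤ (((2 : ℝ) ^ (-c)) ^ (n : ℝ)) ^ s := by
  rw [← rpow_mul zero_le_two, ← rpow_mul zero_le_two]
  apply rpow_le_rpow_of_exponent_le one_le_two
  nlinarith [(Nat.cast_nonneg n : (0 : ℝ) ≤ n)]

section Exponents

variable {m av ae aev t : ℝ}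

lemma exponent_le_neg_div_aev_mul (hm : 0 ≤ m) (haev : 0 < aev) (haevv : aev ≤ av)
    (ht : t ≤ m + 1) :
    m - m / av * t - m / aev * ae ≤
      -(m / aev) * (t - ((m + 1) * (1 - aev / av) + aev) + ae) := by
  have hav : 0 < av := haev.trans_le haevv
  have gap : -(m / aev) * (t - ((m + 1) * (1 - aev / av) + aev) + ae)
      - (m - m / av * t - m / aev * ae) = m / (av * aev) * ((m + 1 - t) * (av - aev)) := by
    field_simp
    ring
  have : 0 ≤ m / (av * aev) * ((m + 1 - t) * (av - aev)) := by
    apply mul_nonneg (by positivity) (mul_nonneg _ _) <;> linarith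
  linarith

lemma exponent_le_neg_div_av_mul (hm : 0 ≤ m) (haev : 0 < aev) (haevv : aev ≤ av)
    (haeve : aev ≤ ae) :
    m - m / av * t - m / aev * ae ≤
      -(m / av) * (t - ((m + 1) * (1 - aev / av) + aev) + ae) := by
  have hav : 0 < av := haev.trans_le haevv
  have gap : -(m / av) * (t - ((m + 1) * (1 - aev / av) + aev) + ae)
      - (m - m / av * t - m / aev * ae)
      = m / (av ^ 2 * aev) * ((av - aev) * ((m + 1) * aev + (ae - aev) * av)) := by
    field_simp
    ring
  have : 0 ≤ m / (av ^ 2 * aev) * ((av - aev) * ((m + 1) * aev + (ae - aev) * av)) := by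
    apply mul_nonneg (by positivity) (mul_nonneg (by linarith) _)
    nlinarith [mul_nonneg (sub_nonneg.2 haeve) hav.le]
  linarith

end Exponents

theorem stmt_6_general (m av ae aev : ℝ) (hm : 1 ≤ m)
    (haev : 0 < aev) (haevv : aev ≤ av) (haeve : aev ≤ ae)
    (κv κev aV : ℝ)
    (hκv : κv = (2 : ℝ) ^ (-(m / av)))
    (hκev : κev = (2 : ℝ) ^ (-(m / aev)))
    (haV : aV = (m + 1) * (1 - aev / av) + aev) :
    ∀ (n : ℕ) (t : ℝ), 0 ≤ t → t ≤ m + 1 →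
      ∀ ρ ρh : ℝ, 0 < ρ → 0 < ρh →
        κev ^ (n : ℝ) * ρh ≤ ρ → ρ ≤ κv ^ (n : ℝ) * ρh →
        (2 : ℝ) ^ ((n : ℝ) * m) * κv ^ ((n : ℝ) * t) * κev ^ ((n : ℝ) * ae) *
          ρh ^ (t - aV + ae) ≤ ρ ^ (t - aV + ae) := by
  intro n t _ ht ρ ρh _ hρh hlo hhi
  subst hκv hκev haV
  have hm0 : 0 ≤ m := zero_le_one.trans hm
  refine le_rpow_of_mul_le_of_le_mul (by positivity) (by positivity) hρh hlo hhi ?_ ?_ <;>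
    rw [two_rpow_mul_mul_two_rpow_neg_mul_two_rpow_neg] <;>
    apply two_rpow_mul_le_rpow_of_le
  · exact exponent_le_neg_div_aev_mul hm0 haev haevv ht
  · exact exponent_le_neg_div_av_mul hm0 haev haevv haeve

/-- The combined case analysis (eqns (rhov1)–(rhov3)) inside Corollary 4.16:
with `κ_v = 2^{−m/a_v}`, `κ_ev = 2^{−m/a_ev}`, and
`a_V = (m+1)(1 − a_ev/a_v) + a_ev`, for every refinement level `n`, every
`t ∈ [0, m+1]` and all positive reals `ρ`, `ρ̂` with
`κ_ev^n·ρ̂ ≤ ρ ≤ κ_v^n·ρ̂`, one has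
`2^{nm} κ_v^{nt} κ_ev^{n a_e} ρ̂^{t − a_V + a_e} ≤ ρ^{t − a_V + a_e}` (real powers). -/
theorem stmt_6 (m av ae aev : ℝ) (hm : 1 ≤ m)
    (haev : 0 < aev) (haevv : aev ≤ av) (havm : av ≤ m) (haeve : aev ≤ ae)
    (κv κev aV : ℝ)
    (hκv : κv = (2 : ℝ) ^ (-(m / av)))
    (hκev : κev = (2 : ℝ) ^ (-(m / aev)))
    (haV : aV = (m + 1) * (1 - aev / av) + aev) :
    ∀ (n : ℕ) (t : ℝ), 0 ≤ t → t ≤ m + 1 →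
      ∀ ρ ρh : ℝ, 0 < ρ → 0 < ρh →
        κev ^ (n : ℝ) * ρh ≤ ρ → ρ ≤ κv ^ (n : ℝ) * ρh →
        (2 : ℝ) ^ ((n : ℝ) * m) * κv ^ ((n : ℝ) * t) * κev ^ ((n : ℝ) * ae) *
          ρh ^ (t - aV + ae) ≤ ρ ^ (t - aV + ae) :=
  stmt_6_general m av ae aev hm haev haevv haeve κv κev aV hκv hκev haV
end

section
/- Let x0, x1, x2, x3 ∈ ℝ³ be affinely independent points, and for 0 ≤ k < l ≤ 3 let x_{kl} = (x_k + x_l)/2 be the edge midpoints. Consider the eight tetrahedra given as convex hulls of the vertex sets {x0, x01, x02, x03}, {x1, x01, x12, x13}, {x2, x02, x12, x23}, {x3, x03, x13, x23}, {x01, x02, x03, x13}, {x01, x02, x12, x13}, {x02, x03, x13, x23}, {x02, x12, x13, x23}. Then the union of these eight tetrahedra equals the convex hull of {x0, x1, x2, x3}, and their interiors are pairwise disjoint. -/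
/-!
Work in barycentric coordinates `λ` with respect to `x0, x1, x2, x3`. A point with `λ_k ≥ 1/2`
lies in the corner piece at `x_k`; otherwise it lies in the octahedron, where the signs of
`λ0 + λ1 - λ2 - λ3` and `λ0 + λ3 - λ1 - λ2` (the two planes through the diagonal `x02 x13`) select
one of its four pieces. In each case explicit weights, linear in `λ`, write the point as a convex
combination of the vertices of that piece.

Conversely, any two pieces lie on opposite sides of one of the six planes `λ_k = 1/2`,
`λ0 + λ1 = λ2 + λ3`, `λ0 + λ3 = λ1 + λ2`; the interior of a set contained in a closed half-space
lies in the open half-space, so the interiors of the pieces are pairwise disjoint.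
-/

open Set Function

theorem AffineMap.linear_ne_zero_of_apply_ne {k V₁ P₁ V₂ P₂ : Type*} [Ring k] [AddCommGroup V₁]
    [Module k V₁] [AddTorsor V₁ P₁] [AddCommGroup V₂] [Module k V₂] [AddTorsor V₂ P₂]
    (f : P₁ →ᵃ[k] P₂) {a b : P₁} (h : f a ≠ f b) : f.linear ≠ 0 := by
  intro h0
  apply h
  rw [← vsub_eq_zero_iff_eq, ← f.linearMap_vsub, h0, LinearMap.zero_apply]

section Separation

variable {E : Type*} [NormedAddCommGroup E] [NormedSpace ℝ E] {g : E →ᵃ[ℝ] ℝ}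

theorem AffineMap.isOpenMap_of_linear_ne_zero (hg : g.linear ≠ 0) : IsOpenMap g :=
  isOpenMap_linear_iff.mp <| g.linear.isOpenMap_of_finiteDimensional <|
    LinearMap.surjective_of_ne_zero hg

variable [FiniteDimensional ℝ E]

theorem AffineMap.interior_preimage_Ici (hg : g.linear ≠ 0) (a : ℝ) :
    interior (g ⁻¹' Ici a) = g ⁻¹' Ioi a := by
  rw [← (isOpenMap_of_linear_ne_zero hg).preimage_interior_eq_interior_preimage
    g.continuous_of_finiteDimensional, interior_Ici]

theorem AffineMap.interior_preimage_Iic (hg : g.linear ≠ 0) (a : ℝ) :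
    interior (g ⁻¹' Iic a) = g ⁻¹' Iio a := by
  rw [← (isOpenMap_of_linear_ne_zero hg).preimage_interior_eq_interior_preimage
    g.continuous_of_finiteDimensional, interior_Iic]

theorem disjoint_interior_convexHull_of_nonneg_of_nonpos (hg : g.linear ≠ 0) {s t : Set E}
    (hs : ∀ x ∈ s, 0 ≤ g x) (ht : ∀ x ∈ t, g x ≤ 0) :
    Disjoint (interior (convexHull ℝ s)) (interior (convexHull ℝ t)) := by
  have hs' : convexHull ℝ s ⊆ g ⁻¹' Ici 0 := convexHull_min hs ((convex_Ici 0).affine_preimage g)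
  have ht' : convexHull ℝ t ⊆ g ⁻¹' Iic 0 := convexHull_min ht ((convex_Iic 0).affine_preimage g)
  refine Disjoint.mono (interior_mono hs') (interior_mono ht') ?_
  rw [g.interior_preimage_Ici hg, g.interior_preimage_Iic hg]
  exact Ioi_disjoint_Iio_same.preimage g

end Separation

theorem exists_mem_stdSimplex_of_mem_convexHull_range {ι E : Type*} [Fintype ι] [AddCommGroup E]
    [Module ℝ E] {p : ι → E} {x : E} (hx : x ∈ convexHull ℝ (range p)) :
    ∃ l ∈ stdSimplex ℝ ι, ∑ k, l k • p k = x := by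
  classical
  have : range p = Fintype.linearCombination ℝ p '' range fun k => Pi.single k 1 := by
    rw [← range_comp]; congr; ext k; simp
  rw [this, ← LinearMap.image_convexHull, convexHull_rangle_single_eq_stdSimplex] at hx
  simpa [Fintype.linearCombination_apply] using hx

section CoordCombination

variable {ι k V P : Type*} [Fintype ι] [Ring k] [AddCommGroup V] [Module k V] [AddTorsor V P]

noncomputable def AffineBasis.coordCombination (b : AffineBasis ι k P) (w : ι → k) : P →ᵃ[k] k :=
  (Fintype.linearCombination k w).toAffineMap.comp b.coords

theorem AffineBasis.coordCombination_apply_self (b : AffineBasis ι k P) (w : ι → k) (i : ι) :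
    b.coordCombination w (b i) = w i := by
  classical
  simp [coordCombination, Fintype.linearCombination_apply, b.coord_apply]

end CoordCombination

namespace UniformRefinement

/-- `(k, l)` stands for the edge midpoint `x_{kl}`, and `(k, k)` for the vertex `x_k`. -/
def vertex : Fin 8 → Fin 4 → Fin 4 × Fin 4 :=
  ![![(0, 0), (0, 1), (0, 2), (0, 3)], ![(1, 1), (0, 1), (1, 2), (1, 3)],
    ![(2, 2), (0, 2), (1, 2), (2, 3)], ![(3, 3), (0, 3), (1, 3), (2, 3)],
    ![(0, 1), (0, 2), (0, 3), (1, 3)], ![(0, 1), (0, 2), (1, 2), (1, 3)],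
    ![(0, 2), (0, 3), (1, 3), (2, 3)], ![(0, 2), (1, 2), (1, 3), (2, 3)]]

/-- For `l` in the standard simplex, the barycentric coordinates of `∑ k, l k • p k` with respect
to the vertices of piece `i`; the constant `1` is written as `∑ k, l k` to make them linear. -/
def coord (l : Fin 4 → ℝ) : Fin 8 → Fin 4 → ℝ :=
  ![![l 0 - l 1 - l 2 - l 3, 2 * l 1, 2 * l 2, 2 * l 3],
    ![l 1 - l 0 - l 2 - l 3, 2 * l 0, 2 * l 2, 2 * l 3],
    ![l 2 - l 0 - l 1 - l 3, 2 * l 0, 2 * l 1, 2 * l 3],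
    ![l 3 - l 0 - l 1 - l 2, 2 * l 0, 2 * l 1, 2 * l 2],
    ![l 0 + l 1 - l 2 - l 3, 2 * l 2, l 0 + l 3 - l 1 - l 2, l 1 + l 2 + l 3 - l 0],
    ![l 0 + l 1 - l 2 - l 3, l 0 + l 2 + l 3 - l 1, l 1 + l 2 - l 0 - l 3, 2 * l 3],
    ![l 0 + l 1 + l 2 - l 3, l 0 + l 3 - l 1 - l 2, 2 * l 1, l 2 + l 3 - l 0 - l 1],
    ![2 * l 0, l 1 + l 2 - l 0 - l 3, l 0 + l 1 + l 3 - l 2, l 2 + l 3 - l 0 - l 1]]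

theorem sum_coord (l : Fin 4 → ℝ) (i : Fin 8) : ∑ v, coord l i v = ∑ k, l k := by
  fin_cases i <;> simp [coord, Fin.sum_univ_four] <;> ring

theorem sum_coord_smul_midpoint {E : Type*} [AddCommGroup E] [Module ℝ E] (p : Fin 4 → E)
    (l : Fin 4 → ℝ) (i : Fin 8) :
    ∑ v, coord l i v • midpoint ℝ (p (vertex i v).1) (p (vertex i v).2) = ∑ k, l k • p k := by
  fin_cases i <;> simp [coord, vertex, Fin.sum_univ_four, midpoint_eq_smul_add] <;> module

theorem exists_coord_nonneg {l : Fin 4 → ℝ} (hl : ∀ k, 0 ≤ l k) : ∃ i, ∀ v, 0 ≤ coord l i v := by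
  have := hl 0; have := hl 1; have := hl 2; have := hl 3
  by_cases h0 : l 1 + l 2 + l 3 ≤ l 0
  · exact ⟨0, fun v => by fin_cases v <;> simp [coord] <;> linarith⟩
  by_cases h1 : l 0 + l 2 + l 3 ≤ l 1
  · exact ⟨1, fun v => by fin_cases v <;> simp [coord] <;> linarith⟩
  by_cases h2 : l 0 + l 1 + l 3 ≤ l 2
  · exact ⟨2, fun v => by fin_cases v <;> simp [coord] <;> linarith⟩
  by_cases h3 : l 0 + l 1 + l 2 ≤ l 3
  · exact ⟨3, fun v => by fin_cases v <;> simp [coord] <;> linarith⟩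
  rcases le_total 0 (l 0 + l 1 - l 2 - l 3) with hs | hs <;>
    rcases le_total 0 (l 0 + l 3 - l 1 - l 2) with ht | ht
  · exact ⟨4, fun v => by fin_cases v <;> simp [coord] <;> linarith⟩
  · exact ⟨5, fun v => by fin_cases v <;> simp [coord] <;> linarith⟩
  · exact ⟨6, fun v => by fin_cases v <;> simp [coord] <;> linarith⟩
  · exact ⟨7, fun v => by fin_cases v <;> simp [coord] <;> linarith⟩

/-- Coefficient vectors `w`, with respect to the barycentric coordinates `λ`, of the planes
`∑ k, w k * λ_k = 0`: the planes `λ_k = 1/2` (written as `2 λ_k - ∑ λ = 0`) and the two planes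
through the diagonal `x02 x13`. -/
def wall : Fin 6 → Fin 4 → ℤ :=
  ![![1, -1, -1, -1], ![-1, 1, -1, -1], ![-1, -1, 1, -1], ![-1, -1, -1, 1],
    ![1, 1, -1, -1], ![1, -1, -1, 1]]

/-- `wall n k + wall n l` is twice the value of the wall functional at `x_{kl}`. -/
def Separates (n : Fin 6) (i j : Fin 8) : Prop :=
  (∀ v, 0 ≤ wall n (vertex i v).1 + wall n (vertex i v).2) ∧
    ∀ v, wall n (vertex j v).1 + wall n (vertex j v).2 ≤ 0

instance (n : Fin 6) : DecidableRel (Separates n) :=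
  fun _ _ => inferInstanceAs (Decidable (_ ∧ _))

theorem exists_separates {i j : Fin 8} (h : i ≠ j) : ∃ n, Separates n i j ∨ Separates n j i := by
  revert i j; decide

theorem exists_wall_ne (n : Fin 6) : ∃ k, wall n k ≠ wall n 0 := by
  revert n; decide

end UniformRefinement

open UniformRefinement

def uniformRefinement {E : Type*} [AddCommGroup E] [Module ℝ E] (p : Fin 4 → E) (i : Fin 8) :
    Set E :=
  convexHull ℝ (range fun v => midpoint ℝ (p (vertex i v).1) (p (vertex i v).2))

section Covering

variable {E : Type*} [AddCommGroup E] [Module ℝ E]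

theorem uniformRefinement_subset_convexHull (p : Fin 4 → E) (i : Fin 8) :
    uniformRefinement p i ⊆ convexHull ℝ (range p) := by
  refine convexHull_min (range_subset_iff.2 fun v => ?_) (convex_convexHull ℝ _)
  exact (convex_convexHull ℝ _).midpoint_mem (subset_convexHull ℝ _ (mem_range_self _))
    (subset_convexHull ℝ _ (mem_range_self _))

theorem convexHull_subset_iUnion_uniformRefinement (p : Fin 4 → E) :
    convexHull ℝ (range p) ⊆ ⋃ i, uniformRefinement p i := by
  intro x hx
  obtain ⟨l, ⟨hl0, hl1⟩, rfl⟩ := exists_mem_stdSimplex_of_mem_convexHull_range hx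
  obtain ⟨i, hi⟩ := exists_coord_nonneg hl0
  refine mem_iUnion_of_mem i ?_
  rw [← sum_coord_smul_midpoint]
  exact (convex_convexHull ℝ _).sum_mem (fun v _ => hi v) ((sum_coord l i).trans hl1)
    fun v _ => subset_convexHull ℝ _ (mem_range_self v)

theorem iUnion_uniformRefinement (p : Fin 4 → E) :
    ⋃ i, uniformRefinement p i = convexHull ℝ (range p) :=
  (iUnion_subset (uniformRefinement_subset_convexHull p)).antisymm
    (convexHull_subset_iUnion_uniformRefinement p)

end Covering

theorem pairwise_disjoint_interior_uniformRefinement {E : Type*} [NormedAddCommGroup E]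
    [NormedSpace ℝ E] (b : AffineBasis (Fin 4) ℝ E) :
    Pairwise (Disjoint on fun i => interior (uniformRefinement b i)) := by
  have := b.finiteDimensional
  have separated : ∀ n i j, Separates n i j →
      Disjoint (interior (uniformRefinement b i)) (interior (uniformRefinement b j)) := by
    rintro n i j ⟨hi, hj⟩
    set g := b.coordCombination fun k => (wall n k : ℝ)
    have hg : ∀ k l, g (midpoint ℝ (b k) (b l)) = ((wall n k + wall n l : ℤ) : ℝ) / 2 := by
      intro k l
      rw [g.map_midpoint, b.coordCombination_apply_self, b.coordCombination_apply_self]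
      simp only [midpoint_eq_smul_add, invOf_eq_inv, smul_eq_mul]
      push_cast; ring
    obtain ⟨k, hk⟩ := exists_wall_ne n
    have hlin : g.linear ≠ 0 := g.linear_ne_zero_of_apply_ne (a := b k) (b := b 0) <| by
      simpa [g, b.coordCombination_apply_self] using hk
    refine disjoint_interior_convexHull_of_nonneg_of_nonpos hlin ?_ ?_ <;>
      rintro _ ⟨v, rfl⟩ <;> rw [hg]
    · exact div_nonneg (by exact_mod_cast hi v) zero_le_two
    · exact div_nonpos_of_nonpos_of_nonneg (by exact_mod_cast hj v) zero_le_two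
  intro i j hij
  obtain ⟨n, h | h⟩ := exists_separates hij
  exacts [separated n i j h, (separated n j i h).symm]

/-- One step of the uniform (o-tetrahedron) refinement of Algorithm 3.2:
cutting a nondegenerate tetrahedron `conv{x0, x1, x2, x3}` by the midpoint
triangles at the four corners and splitting the remaining octahedron along the
diagonal `x02–x13` yields eight sub-tetrahedra whose union is the original
tetrahedron and whose interiors are pairwise disjoint. -/
theorem stmt_9 (x0 x1 x2 x3 : Fin 3 → ℝ)
    (hind : AffineIndependent ℝ ![x0, x1, x2, x3])
    (x01 x02 x03 x12 x13 x23 : Fin 3 → ℝ)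
    (h01 : x01 = (x0 + x1) / 2) (h02 : x02 = (x0 + x2) / 2)
    (h03 : x03 = (x0 + x3) / 2) (h12 : x12 = (x1 + x2) / 2)
    (h13 : x13 = (x1 + x3) / 2) (h23 : x23 = (x2 + x3) / 2)
    (T : Fin 8 → Set (Fin 3 → ℝ))
    (hT : T = ![convexHull ℝ {x0, x01, x02, x03}, convexHull ℝ {x1, x01, x12, x13},
                convexHull ℝ {x2, x02, x12, x23}, convexHull ℝ {x3, x03, x13, x23},
                convexHull ℝ {x01, x02, x03, x13}, convexHull ℝ {x01, x02, x12, x13},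
                convexHull ℝ {x02, x03, x13, x23}, convexHull ℝ {x02, x12, x13, x23}]) :
    (⋃ i, T i) = convexHull ℝ {x0, x1, x2, x3} ∧
    ∀ i j, i ≠ j → Disjoint (interior (T i)) (interior (T j)) := by
  have hspan : affineSpan ℝ (range ![x0, x1, x2, x3]) = ⊤ := by
    rw [hind.affineSpan_eq_top_iff_card_eq_finrank_add_one]
    simp
  let b : AffineBasis (Fin 4) ℝ (Fin 3 → ℝ) := ⟨_, hind, hspan⟩
  have hb : ⇑b = ![x0, x1, x2, x3] := rfl
  have hmid : ∀ u v : Fin 3 → ℝ, (u + v) / 2 = midpoint ℝ u v := fun u v => by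
    rw [midpoint_eq_smul_add]; ext; simp; ring
  have hTb : T = uniformRefinement b := by
    subst hT h01 h02 h03 h12 h13 h23
    funext i
    fin_cases i <;> simp [uniformRefinement, vertex, hb, hmid, Fin.range_fin_succ, Fin.tail]
  have hrange : range b = {x0, x1, x2, x3} := by simp [hb, Fin.range_fin_succ]
  subst hTb
  exact ⟨(iUnion_uniformRefinement b).trans (by rw [hrange]),
    fun i j hij => pairwise_disjoint_interior_uniformRefinement b hij⟩
end
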